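/- From asymmetric basic local to basic local: Let σ be a finite relational signature. Every asymmetric basic local sentence is equivalent over the class of all σ-structures to a positive Boolean combination (built using only conjunction and disjunction) of basic local sentences. -/

import Mathlib

open FirstOrder FirstOrder.Language

universe u v w

namespace Gaifman

/-- Two elements are adjacent in the Gaifman graph of a structure: they are distinct and
occur together in some tuple belonging to some relation. -/
def Adj (L : FirstOrder.Language.{u, u}) (M : Type u) [L.Structure M] (a b : M) : Prop :=
  a ≠ b ∧ ∃ (n : ℕ) (R : L.Relations n) (t : Fin n → M),
    Structure.RelMap R t ∧ a ∈ Set.range t ∧ b ∈ Set.range t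

/-- `CloseLE L M r a b` holds iff the Gaifman distance from `a` to `b` is at most `r`. -/
def CloseLE (L : FirstOrder.Language.{u, u}) (M : Type u) [L.Structure M] :
    ℕ → M → M → Prop
  | 0, a, b => a = b
  | r + 1, a, b => CloseLE L M r a b ∨ ∃ c, CloseLE L M r a c ∧ Adj L M c b

lemma closeLE_self (L : FirstOrder.Language.{u, u}) (M : Type u) [L.Structure M] :
    ∀ (r : ℕ) (a : M), CloseLE L M r a a
  | 0, _ => rfl
  | r + 1, a => Or.inl (closeLE_self L M r a)

/-- The `r`-neighborhood of a tuple: all elements at Gaifman distance at most `r`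
from some component of the tuple. -/
def Ball (L : FirstOrder.Language.{u, u}) {M : Type u} [L.Structure M] {m : ℕ}
    (a : Fin m → M) (r : ℕ) : Set M :=
  {x | ∃ i, CloseLE L M r (a i) x}

lemma self_mem_ball (L : FirstOrder.Language.{u, u}) {M : Type u} [L.Structure M] {m : ℕ}
    (a : Fin m → M) (r : ℕ) (i : Fin m) :
    a i ∈ Ball L a r := ⟨i, closeLE_self L M r (a i)⟩

/-- The substructure induced on a subset of a structure over a relational language. -/
def inducedStructure (L : FirstOrder.Language.{u, u}) [L.IsRelational] {M : Type u}
    [L.Structure M] (s : Set M) : L.Structure s where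
  funMap {n} f _ := isEmptyElim f
  RelMap {n} R t := Structure.RelMap R fun i => (t i : M)

/-- A formula is `r`-local if its truth at a tuple only depends on the induced substructure on
the `r`-neighborhood of the tuple. -/
def IsLocal {L : FirstOrder.Language.{u, u}} [L.IsRelational] (r : ℕ) {m : ℕ}
    (φ : L.Formula (Fin m)) : Prop :=
  ∀ (M : Type u) [L.Structure M] (a : Fin m → M),
    φ.Realize a ↔
      (letI := inducedStructure L (Ball L a r)
       φ.Realize fun i => (⟨a i, self_mem_ball L a r i⟩ : Ball L a r))

/-- Quantifier rank of a (bounded) formula. -/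
def qr {L : FirstOrder.Language.{u, u}} {α : Type v} : ∀ {n : ℕ}, L.BoundedFormula α n → ℕ
  | _, .falsum => 0
  | _, .equal _ _ => 0
  | _, .rel _ _ => 0
  | _, .imp f g => max (qr f) (qr g)
  | _, .all f => qr f + 1

/-- The components of a tuple are at pairwise Gaifman distance greater than `s`. -/
def Far (L : FirstOrder.Language.{u, u}) (M : Type u) [L.Structure M] (s : ℕ) {m : ℕ}
    (a : Fin m → M) : Prop :=
  ∀ i j : Fin m, i ≠ j → ¬ CloseLE L M s (a i) (a j)

/-- `A ≼_{r,q,k} B` : every sentence `∃ x₁ … x_k, τ` with `τ` an `r`-local formula of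
quantifier rank at most `q` that holds in `A` also holds in `B`. -/
def LocLE (L : FirstOrder.Language.{u, u}) [L.IsRelational] (r q k : ℕ) (M N : Type u)
    [L.Structure M] [L.Structure N] : Prop :=
  ∀ τ : L.Formula (Fin k), IsLocal r τ → qr τ ≤ q →
    (∃ a : Fin k → M, τ.Realize a) → ∃ b : Fin k → N, τ.Realize b

/-- The preorder `≼_{r,q,k}` with radius and rank parameters in `ℕ ∪ {∞}`: the intersection
over all finite parameters below the given ones. -/
def LocLEE (L : FirstOrder.Language.{u, u}) [L.IsRelational] (r q : ℕ∞) (k : ℕ)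
    (M N : Type u) [L.Structure M] [L.Structure N] : Prop :=
  ∀ r' q' : ℕ, (r' : ℕ∞) ≤ r → (q' : ℕ∞) ≤ q → LocLE L r' q' k M N

/-- Local elementary embedding. -/
def IsLocalElemEmb (L : FirstOrder.Language.{u, u}) [L.IsRelational] {M N : Type u}
    [L.Structure M] [L.Structure N] (h : M → N) : Prop :=
  ∀ (k r : ℕ) (a : Fin k → M) (φ : L.Formula (Fin k)), IsLocal r φ →
    (φ.Realize a ↔ φ.Realize (h ∘ a))

/-- Disjoint union of two structures over a relational language. -/
def sumStructure (L : FirstOrder.Language.{u, u}) [L.IsRelational] (M N : Type u)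
    [L.Structure M] [L.Structure N] : L.Structure (M ⊕ N) where
  funMap {n} f _ := isEmptyElim f
  RelMap {n} R t :=
    (∃ tm : Fin n → M, t = Sum.inl ∘ tm ∧ Structure.RelMap R tm) ∨
    (∃ tn : Fin n → N, t = Sum.inr ∘ tn ∧ Structure.RelMap R tn)

/-- A bundled `L`-structure. -/
structure Struc (L : FirstOrder.Language.{u, u}) : Type (u + 1) where
  carrier : Type u
  str : L.Structure carrier

attribute [instance] Struc.str

/-- The `(q,r)`-local type of a tuple. -/
def localType (L : FirstOrder.Language.{u, u}) [L.IsRelational] (r q : ℕ) {M : Type u}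
    [L.Structure M] {m : ℕ} (a : Fin m → M) : Set (L.Formula (Fin m)) :=
  {τ | IsLocal r τ ∧ qr τ ≤ q ∧ τ.Realize a}

/-- The collection of `(q,r)`-local types of tuples of at most `k` elements. -/
def Specter (L : FirstOrder.Language.{u, u}) [L.IsRelational] (r q k : ℕ) (M : Type u)
    [L.Structure M] : Set (Σ m : ℕ, Set (L.Formula (Fin m))) :=
  {p | ∃ m, m ≤ k ∧ ∃ a : Fin m → M, p = ⟨m, localType L r q a⟩}

/-- The data of a basic local sentence
`∃ x₁ … x_k, (⋀_{i ≠ j} d(xᵢ,xⱼ) > 2r ∧ ⋀ᵢ ψ(xᵢ))`. -/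
structure BasicLocal (L : FirstOrder.Language.{u, u}) [L.IsRelational] where
  k : ℕ
  r : ℕ
  ψ : L.Formula (Fin 1)
  isLocal : IsLocal r ψ

/-- Truth of a basic local sentence in a structure. -/
def BasicLocal.Holds {L : FirstOrder.Language.{u, u}} [L.IsRelational] (b : BasicLocal L)
    (M : Type u) [L.Structure M] : Prop :=
  ∃ a : Fin b.k → M, Far L M (2 * b.r) a ∧ ∀ i, b.ψ.Realize fun _ => a i

/-- The data of an asymmetric basic local sentence
`∃ x₁ … x_k, (⋀_{i ≠ j} d(xᵢ,xⱼ) > 2r ∧ ⋀ᵢ ψᵢ(xᵢ))`. -/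
structure AsymBasicLocal (L : FirstOrder.Language.{u, u}) [L.IsRelational] where
  k : ℕ
  r : ℕ
  ψ : Fin k → L.Formula (Fin 1)
  isLocal : ∀ i, IsLocal r (ψ i)

/-- Truth of an asymmetric basic local sentence in a structure. -/
def AsymBasicLocal.Holds {L : FirstOrder.Language.{u, u}} [L.IsRelational]
    (d : AsymBasicLocal L) (M : Type u) [L.Structure M] : Prop :=
  ∃ a : Fin d.k → M, Far L M (2 * d.r) a ∧ ∀ i, (d.ψ i).Realize fun _ => a i

/-- Positive Boolean combinations (conjunction and disjunction only). -/
inductive PosBool (α : Type w) : Type w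
  | base : α → PosBool α
  | conj : PosBool α → PosBool α → PosBool α
  | disj : PosBool α → PosBool α → PosBool α

/-- Evaluation of a positive Boolean combination against a truth assignment. -/
def PosBool.Eval {α : Type w} (v : α → Prop) : PosBool α → Prop
  | .base a => v a
  | .conj p q => p.Eval v ∧ q.Eval v
  | .disj p q => p.Eval v ∨ q.Eval v

/-- `φ` is equivalent over the class `C` to an existential local sentence `∃ x⃗, τ(x⃗)`. -/
def EquivToExistLocal {L : FirstOrder.Language.{u, u}} [L.IsRelational]
    (C : Set (Struc L)) (φ : L.Sentence) : Prop :=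
  ∃ (k r : ℕ) (τ : L.Formula (Fin k)), IsLocal r τ ∧
    ∀ S ∈ C, (S.carrier ⊨ φ ↔ ∃ a : Fin k → S.carrier, τ.Realize a)

/-- `A ⊆ᵢ B` : `A` is isomorphic to an induced substructure of `B`. -/
def SubInd {L : FirstOrder.Language.{u, u}} (A B : Struc L) : Prop :=
  Nonempty (A.carrier ↪[L] B.carrier)

/-- A hereditary class: closed under induced substructures. -/
def Hereditary {L : FirstOrder.Language.{u, u}} (C : Set (Struc L)) : Prop :=
  ∀ B ∈ C, ∀ A : Struc L, SubInd A B → A ∈ C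

/-- `φ` is preserved under extensions over `C`. -/
def PreservedUnderExt {L : FirstOrder.Language.{u, u}} (C : Set (Struc L))
    (φ : L.Sentence) : Prop :=
  ∀ A ∈ C, ∀ B ∈ C, A.carrier ⊨ φ → SubInd A B → B.carrier ⊨ φ

/-- `C` is closed under disjoint unions with finite structures. -/
def ClosedUnderDisjointUnions {L : FirstOrder.Language.{u, u}} [L.IsRelational]
    (C : Set (Struc L)) : Prop :=
  ∀ A ∈ C, ∀ B : Struc L, Finite B.carrier →
    (⟨A.carrier ⊕ B.carrier, sumStructure L A.carrier B.carrier⟩ : Struc L) ∈ C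

/-- `Balls(C, r, k)` : the structures isomorphic to an `r`-neighborhood of a tuple of at most
`k` elements of a structure of `C`. -/
def BallsClass {L : FirstOrder.Language.{u, u}} [L.IsRelational] (C : Set (Struc L))
    (r k : ℕ) : Set (Struc L) :=
  {T | ∃ A ∈ C, ∃ m, m ≤ k ∧ ∃ a : Fin m → A.carrier,
    letI := inducedStructure L (Ball L a r)
    Nonempty (T.carrier ≃[L] ↥(Ball L a r))}

/-- A `⊆ᵢ`-minimal model of `φ` in `C`: a model in `C` no proper induced substructure of
which satisfies `φ`. -/
def IsMinimalModel {L : FirstOrder.Language.{u, u}} [L.IsRelational] (C : Set (Struc L))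
    (φ : L.Sentence) (A : Struc L) : Prop :=
  A ∈ C ∧ A.carrier ⊨ φ ∧
    ∀ s : Set A.carrier,
      (letI := inducedStructure L s
       (↥s) ⊨ φ) → s = Set.univ

/-- Preservation under extensions holds over the class `D`: every sentence preserved under
extensions over `D` is equivalent over `D` to an existential sentence. -/
def PresExtHolds {L : FirstOrder.Language.{u, u}} [L.IsRelational]
    (D : Set (Struc L)) : Prop :=
  ∀ φ : L.Sentence, PreservedUnderExt D φ →
    ∃ (n : ℕ) (θ : L.Formula (Fin n)), θ.IsQF ∧
      ∀ S ∈ D, (S.carrier ⊨ φ ↔ ∃ a : Fin n → S.carrier, θ.Realize a)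

end Gaifman

/-!
Let `x₁, …, x_k` be witnesses of the asymmetric sentence, pairwise more than `2 r` apart.
Merging greedily the clusters whose centres are close, after `t < k` rounds every witness
lies within `D t` of the centre of its cluster while distinct centres are more than `2 ρ t`
apart (`D = clusterRadius`, `ρ = centreRadius`). Hence, for the labelling `c` of the
witnesses by their clusters and this `t`, every set `Q` of labels has `#Q` centres pairwise
more than `2 ρ t` apart, each the centre of a cluster of witnesses for one label class: a
basic local sentence, since being such a centre is `ρ t`-local. Conversely, if all these
sentences hold for some `c` and `t`, a Hall-type argument with loss of scale (when no
far-apart system of centres exists, the candidate centres are covered by too few balls)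
yields centres of all label classes pairwise far apart, and their clusters together
witness the asymmetric sentence.
-/

namespace Gaifman

section Distance

variable {L : FirstOrder.Language.{u, u}} {M : Type u} [L.Structure M]

lemma adj_symm {a b : M} (h : Adj L M a b) : Adj L M b a :=
  let ⟨hne, n, R, t, hR, ha, hb⟩ := h
  ⟨hne.symm, n, R, t, hR, hb, ha⟩

lemma eq_or_adj_of_mem_range {n : ℕ} {R : L.Relations n} {t : Fin n → M}
    (hR : Structure.RelMap R t) {a : M} (ha : a ∈ Set.range t) (l : Fin n) :
    a = t l ∨ Adj L M a (t l) := by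
  by_cases h : a = t l
  · exact Or.inl h
  · exact Or.inr ⟨h, n, R, t, hR, ha, l, rfl⟩

lemma closeLE_mono {s t : ℕ} (hst : s ≤ t) {a b : M} (h : CloseLE L M s a b) :
    CloseLE L M t a b := by
  induction t, hst using Nat.le_induction with
  | base => exact h
  | succ n _ ih => exact Or.inl ih

lemma closeLE_trans {s t : ℕ} {a b c : M} (hab : CloseLE L M s a b)
    (hbc : CloseLE L M t b c) : CloseLE L M (s + t) a c := by
  induction t generalizing c with
  | zero => cases hbc; exact hab
  | succ t ih =>
    rcases hbc with hbc | ⟨d, hbd, hdc⟩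
    · exact Or.inl (ih hbc)
    · exact Or.inr ⟨d, ih hbd, hdc⟩

lemma closeLE_symm {s : ℕ} {a b : M} (h : CloseLE L M s a b) : CloseLE L M s b a := by
  induction s generalizing b with
  | zero => exact h.symm
  | succ s ih =>
    rcases h with h | ⟨c, hac, hcb⟩
    · exact Or.inl (ih h)
    · have hbc : CloseLE L M 1 b c := Or.inr ⟨b, rfl, adj_symm hcb⟩
      exact (Nat.add_comm 1 s) ▸ closeLE_trans hbc (ih hac)

end Distance

section Induced

instance instStructureInduced {L : FirstOrder.Language.{u, u}} [L.IsRelational] {M : Type u}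
    [L.Structure M] (s : Set M) : L.Structure s :=
  inducedStructure L s

variable {L : FirstOrder.Language.{u, u}} [L.IsRelational] {M : Type u} [L.Structure M]
  {s : Set M}

lemma adj_of_induced {u w : s} (h : Adj L s u w) : Adj L M u w :=
  let ⟨hne, n, R, t, hR, ⟨i, hi⟩, ⟨j, hj⟩⟩ := h
  ⟨fun h => hne (Subtype.ext h), n, R, fun l => t l, hR, ⟨i, congrArg _ hi⟩, ⟨j, congrArg _ hj⟩⟩

lemma closeLE_of_induced {n : ℕ} {u w : s} (h : CloseLE L s n u w) : CloseLE L M n u w := by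
  induction n generalizing w with
  | zero => exact congrArg Subtype.val h
  | succ n ih =>
    rcases h with h | ⟨c, huc, hcw⟩
    · exact Or.inl (ih h)
    · exact Or.inr ⟨c, ih huc, adj_of_induced hcw⟩

/-- A path of length `n` from `u`, together with the relation tuples witnessing its edges,
stays in the `n`-ball around `u`. -/
lemma closeLE_induced_iff {n : ℕ} {u w : s} (hs : ∀ z, CloseLE L M n u z → z ∈ s) :
    CloseLE L s n u w ↔ CloseLE L M n u w := by
  refine ⟨closeLE_of_induced, fun h => ?_⟩
  induction n generalizing w with
  | zero => exact Subtype.ext h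
  | succ n ih =>
    have hs' : ∀ z, CloseLE L M n u z → z ∈ s := fun z hz => hs z (Or.inl hz)
    rcases h with h | ⟨c, huc, hcw⟩
    · exact Or.inl (ih hs' h)
    · obtain ⟨hne, m, R, t, hR, hc, ⟨j, hj⟩⟩ := hcw
      have ht : ∀ l, t l ∈ s := fun l => hs _ <| by
        rcases eq_or_adj_of_mem_range hR hc l with h | h
        · exact Or.inl (h ▸ huc)
        · exact Or.inr ⟨c, huc, h⟩
      obtain ⟨i, hi⟩ := hc
      refine Or.inr ⟨⟨c, hs' c huc⟩, ih hs' huc, fun h => hne (congrArg Subtype.val h), m, R,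
        fun l => ⟨t l, ht l⟩, hR, ⟨i, Subtype.ext hi⟩, ⟨j, Subtype.ext hj⟩⟩

lemma realize_induced_iff {r : ℕ} {φ : L.Formula (Fin 1)} (hφ : IsLocal r φ) {y : s}
    (hs : ∀ z, CloseLE L M r y z → z ∈ s) :
    φ.Realize (fun _ => y) ↔ φ.Realize (fun _ => (y : M)) := by
  rw [hφ s, hφ M]
  have mem_iff : ∀ z : s, z ∈ Ball L (fun _ : Fin 1 => y) r ↔
      (z : M) ∈ Ball L (fun _ : Fin 1 => (y : M)) r := fun z =>
    exists_congr fun _ => closeLE_induced_iff hs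
  let e : Ball L (fun _ : Fin 1 => y) r ≃[L] Ball L (fun _ : Fin 1 => (y : M)) r :=
    { toFun := fun z => ⟨z.1, (mem_iff z.1).1 z.2⟩
      invFun := fun z => ⟨⟨z.1, hs z.1 (z.2.choose_spec)⟩, (mem_iff _).2 z.2⟩
      left_inv := fun _ => rfl
      right_inv := fun _ => rfl
      map_fun' := fun f => isEmptyElim f
      map_rel' := fun _ _ => Iff.rfl }
  exact (StrongHomClass.realize_formula e (φ := φ)).symm

end Induced

section Definability

variable (L : FirstOrder.Language.{u, u}) [Finite (Σ n, L.Relations n)]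

noncomputable def adjFormula : L.Formula (Fin 2) :=
  (Term.equal (Term.var 0) (Term.var 1)).not ⊓
    Formula.iSup fun R : Σ n, L.Relations n =>
      Formula.iExs (Fin R.1)
        (R.2.formula (fun i => Term.var (Sum.inr i)) ⊓
          (Formula.iSup fun i => Term.equal (Term.var (Sum.inr i)) (Term.var (Sum.inl 0))) ⊓
          (Formula.iSup fun i => Term.equal (Term.var (Sum.inr i)) (Term.var (Sum.inl 1))))

noncomputable def closeFormula : ℕ → L.Formula (Fin 2)
  | 0 => Term.equal (Term.var 0) (Term.var 1)
  | n + 1 => closeFormula n ⊔ Formula.iExs (Fin 1)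
      ((closeFormula n).relabel ![Sum.inl 0, Sum.inr 0] ⊓
        (adjFormula L).relabel ![Sum.inr 0, Sum.inl 1])

variable {L} {M : Type u} [L.Structure M]

@[simp]
lemma realize_adjFormula (v : Fin 2 → M) : (adjFormula L).Realize v ↔ Adj L M (v 0) (v 1) := by
  simp only [adjFormula, Formula.realize_inf, Formula.realize_not, Formula.realize_equal,
    Term.realize_var, Formula.realize_iSup, Formula.realize_iExs, Formula.realize_rel,
    Sum.elim_inl, Sum.elim_inr, Adj, Sigma.exists, Set.mem_range, and_assoc]

@[simp]
lemma realize_closeFormula (n : ℕ) (v : Fin 2 → M) :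
    (closeFormula L n).Realize v ↔ CloseLE L M n (v 0) (v 1) := by
  induction n generalizing v with
  | zero => simp [closeFormula, CloseLE]
  | succ n ih =>
    simp only [closeFormula, CloseLE, Formula.realize_sup, Formula.realize_iExs,
      Formula.realize_inf, Formula.realize_relabel, ih, realize_adjFormula, Function.comp_def]
    refine or_congr Iff.rfl ⟨fun ⟨w, h⟩ => ⟨w 0, by simpa using h⟩, fun ⟨c, h⟩ =>
      ⟨fun _ => c, by simpa using h⟩⟩

end Definability

section WitnessCluster

variable {L : FirstOrder.Language.{u, u}} {M : Type u} [L.Structure M] {ι : Type*}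

def WitnessCluster (ψ : ι → L.Formula (Fin 1)) (r Δ : ℕ) (x : M) : Prop :=
  ∃ y : ι → M, (∀ i, CloseLE L M Δ x (y i) ∧ (ψ i).Realize fun _ => y i) ∧
    Pairwise fun i j => ¬ CloseLE L M (2 * r) (y i) (y j)

variable (L) in
noncomputable def witnessClusterFormula [Finite (Σ n, L.Relations n)] [Finite ι]
    (ψ : ι → L.Formula (Fin 1)) (r Δ : ℕ) : L.Formula (Fin 1) :=
  Formula.iExs ι
    ((Formula.iInf fun i =>
        (closeFormula L Δ).relabel ![Sum.inl 0, Sum.inr i] ⊓ (ψ i).relabel fun _ => Sum.inr i) ⊓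
      Formula.iInf fun ij : {ij : ι × ι // ij.1 ≠ ij.2} =>
        ((closeFormula L (2 * r)).relabel ![Sum.inr ij.1.1, Sum.inr ij.1.2]).not)

@[simp]
lemma realize_witnessClusterFormula [Finite (Σ n, L.Relations n)] [Finite ι]
    {ψ : ι → L.Formula (Fin 1)} {r Δ : ℕ} (v : Fin 1 → M) :
    (witnessClusterFormula L ψ r Δ).Realize v ↔ WitnessCluster ψ r Δ (v 0) := by
  simp [witnessClusterFormula, WitnessCluster, Function.comp_def, Pairwise]

lemma WitnessCluster.exists_extend {p : ι → Prop} {ψ : ι → L.Formula (Fin 1)} {r Δ : ℕ} {x : M}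
    (h : WitnessCluster (fun i : {i // p i} => ψ i) r Δ x) :
    ∃ y : ι → M, (∀ i, p i → CloseLE L M Δ x (y i) ∧ (ψ i).Realize fun _ => y i) ∧
      ∀ i j, p i → p j → i ≠ j → ¬ CloseLE L M (2 * r) (y i) (y j) := by
  classical
  obtain ⟨y, hy, hsep⟩ := h
  refine ⟨fun i => if hi : p i then y ⟨i, hi⟩ else x, fun i hi => by simpa [hi] using hy ⟨i, hi⟩,
    fun i j hi hj hij => by simpa [hi, hj] using hsep (i := ⟨i, hi⟩) (j := ⟨j, hj⟩) (by simpa)⟩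

variable [L.IsRelational] {s : Set M}

lemma witnessCluster_induced_iff {ψ : ι → L.Formula (Fin 1)} {r Δ : ℕ}
    (hψ : ∀ i, IsLocal r (ψ i)) {x : s} (hs : ∀ z, CloseLE L M (Δ + 2 * r) x z → z ∈ s) :
    WitnessCluster ψ r Δ x ↔ WitnessCluster ψ r Δ (x : M) := by
  have ball_subset : ∀ {a : M} {n}, CloseLE L M Δ x a → n ≤ 2 * r →
      ∀ z, CloseLE L M n a z → z ∈ s := fun hxa hn z haz =>
    hs z (closeLE_mono (by omega) (closeLE_trans hxa haz))
  constructor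
  · rintro ⟨y, hy, hsep⟩
    have hxy : ∀ i, CloseLE L M Δ x (y i) := fun i => closeLE_of_induced (hy i).1
    refine ⟨fun i => y i, fun i => ⟨hxy i, ?_⟩, fun i j hij h => hsep hij ?_⟩
    · exact (realize_induced_iff (hψ i) (ball_subset (hxy i) (by omega))).1 (hy i).2
    · exact (closeLE_induced_iff (ball_subset (hxy i) le_rfl)).2 h
  · rintro ⟨y, hy, hsep⟩
    have hys : ∀ i, y i ∈ s := fun i => ball_subset (hy i).1 (Nat.zero_le _) _ (closeLE_self ..)
    refine ⟨fun i => ⟨y i, hys i⟩, fun i => ⟨?_, ?_⟩, fun i j hij h => hsep hij ?_⟩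
    · exact (closeLE_induced_iff fun z hz => hs z (closeLE_mono (by omega) hz)).2 (hy i).1
    · exact (realize_induced_iff (hψ i) (ball_subset (hy i).1 (by omega))).2 (hy i).2
    · exact closeLE_of_induced h

lemma isLocal_witnessClusterFormula [Finite (Σ n, L.Relations n)] [Finite ι]
    {ψ : ι → L.Formula (Fin 1)} {r Δ ρ : ℕ} (hψ : ∀ i, IsLocal r (ψ i)) (hρ : Δ + 2 * r ≤ ρ) :
    IsLocal ρ (witnessClusterFormula L ψ r Δ) := by
  intro N _ a
  rw [realize_witnessClusterFormula, realize_witnessClusterFormula]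
  exact (witnessCluster_induced_iff (x := ⟨a 0, self_mem_ball L a ρ 0⟩) hψ
    fun z hz => ⟨0, closeLE_mono hρ hz⟩).symm

end WitnessCluster

section Clustering

variable {L : FirstOrder.Language.{u, u}} {M : Type u} [L.Structure M]

/-- Greedy clustering: starting from singletons, repeatedly merge two clusters whose
representatives are `μ t`-close; each merge is paid for by passing from radius `D t` to
`D (t + 1)`, and there are fewer merges than points. -/
theorem exists_clustering {ι : Type*} [Fintype ι] (x : ι → M) (D μ : ℕ → ℕ)
    (hD : ∀ t, D t + μ t ≤ D (t + 1)) :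
    ∃ t ≤ Fintype.card ι, ∃ f : ι → ι, (∀ i, CloseLE L M (D t) (x (f i)) (x i)) ∧
      ∀ i j, f i ≠ f j → ¬ CloseLE L M (μ t) (x (f i)) (x (f j)) := by
  classical
  suffices h : ∀ n t (f : ι → ι), (Finset.univ.image f).card = n →
      t + n ≤ Fintype.card ι → (∀ i, CloseLE L M (D t) (x (f i)) (x i)) →
      ∃ t ≤ Fintype.card ι, ∃ f : ι → ι, (∀ i, CloseLE L M (D t) (x (f i)) (x i)) ∧
        ∀ i j, f i ≠ f j → ¬ CloseLE L M (μ t) (x (f i)) (x (f j)) from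
    h _ 0 id rfl (by simp [Finset.card_univ]) fun i => closeLE_self L M _ (x i)
  intro n
  induction n using Nat.strong_induction_on with
  | _ n ih =>
    intro t f hn htn hf
    by_cases hsep : ∀ i j, f i ≠ f j → ¬ CloseLE L M (μ t) (x (f i)) (x (f j))
    · exact ⟨t, by omega, f, hf, hsep⟩
    push Not at hsep
    obtain ⟨i, j, hij, hclose⟩ := hsep
    let g : ι → ι := fun l => if f l = f j then f i else f l
    have himage : Finset.univ.image g ⊆ (Finset.univ.image f).erase (f j) := by
      simp only [Finset.subset_iff, Finset.mem_image, Finset.mem_univ, true_and,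
        Finset.mem_erase, forall_exists_index, forall_apply_eq_imp_iff, g]
      intro l
      split_ifs with h
      · exact ⟨hij, i, rfl⟩
      · exact ⟨h, l, rfl⟩
    have hcard := (Finset.card_le_card himage).trans_lt
      (Finset.card_erase_lt_of_mem (Finset.mem_image_of_mem f (Finset.mem_univ j)))
    refine ih _ (hn ▸ hcard) (t + 1) g rfl (by omega) fun l => ?_
    have hDt := hD t
    simp only [g]
    split_ifs with h
    · exact closeLE_mono (by omega) (closeLE_trans hclose (h ▸ hf l))
    · exact closeLE_mono (by omega) (hf l)

end Clustering

section Transversal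

variable (L : FirstOrder.Language.{u, u}) {M : Type u} [L.Structure M] {ι : Type*}

def IsSepTransversal (F : ι → Set M) (C : Finset ι) (σ : ℕ) (z : ι → M) : Prop :=
  (∀ i ∈ C, z i ∈ F i) ∧ ∀ i ∈ C, ∀ j ∈ C, i ≠ j → ¬ CloseLE L M σ (z i) (z j)

def HasDeficientCover (F : ι → Set M) (C : Finset ι) (s : ℕ) : Prop :=
  ∃ S ⊆ C, ∃ W : Finset M, W.card < S.card ∧ ∀ i ∈ S, ∀ x ∈ F i, ∃ w ∈ W, CloseLE L M s w x

variable {L} {F : ι → Set M} {C : Finset ι} {σ : ℕ}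

lemma HasDeficientCover.mono {C' : Finset ι} {s s' : ℕ} (h : HasDeficientCover L F C s)
    (hC : C ⊆ C') (hs : s ≤ s') : HasDeficientCover L F C' s' :=
  let ⟨S, hS, W, hW, hcov⟩ := h
  ⟨S, hS.trans hC, W, hW, fun i hi x hx =>
    let ⟨w, hw, hwx⟩ := hcov i hi x hx
    ⟨w, hw, closeLE_mono hs hwx⟩⟩

lemma IsSepTransversal.update [DecidableEq ι] {i : ι} {z : ι → M}
    (hz : IsSepTransversal L F (C.erase i) σ z) {x : M} (hx : x ∈ F i)
    (hfar : ∀ j ∈ C.erase i, ¬ CloseLE L M σ (z j) x) :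
    IsSepTransversal L F C σ (Function.update z i x) := by
  refine ⟨fun j hj => ?_, fun j hj j' hj' hne => ?_⟩
  · rcases eq_or_ne j i with rfl | hji
    · simpa using hx
    · simpa [hji] using hz.1 j (Finset.mem_erase.2 ⟨hji, hj⟩)
  · rcases eq_or_ne j i with rfl | hji
    · simpa [hne.symm] using fun h => hfar j' (Finset.mem_erase.2 ⟨hne.symm, hj'⟩) (closeLE_symm h)
    rcases eq_or_ne j' i with rfl | hj'i
    · simpa [hji] using hfar j (Finset.mem_erase.2 ⟨hji, hj⟩)
    · simpa [hji, hj'i] using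
        hz.2 j (Finset.mem_erase.2 ⟨hji, hj⟩) j' (Finset.mem_erase.2 ⟨hj'i, hj'⟩) hne

/-- Hall's theorem, applied to the sets of centres near each `F i`. -/
lemma hasDeficientCover_of_separated_cover [Nonempty M] (R : Finset M) {s : ℕ}
    (hR : (R : Set M).Pairwise fun u v => ¬ CloseLE L M (s + σ + s) u v)
    (hcov : ∀ i ∈ C, ∀ x ∈ F i, ∃ w ∈ R, CloseLE L M s w x)
    (hnt : ¬ ∃ z, IsSepTransversal L F C σ z) : HasDeficientCover L F C s := by
  classical
  by_contra hdef
  let touch : C → Finset M := fun i => R.filter fun w => ∃ x ∈ F i, CloseLE L M s w x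
  have hall : ∀ S : Finset C, S.card ≤ (S.biUnion touch).card := by
    intro S
    by_contra hlt
    refine hdef ⟨S.map (Function.Embedding.subtype _), fun i hi => ?_, S.biUnion touch,
      by simpa using hlt, fun i hi x hx => ?_⟩ <;>
    obtain ⟨⟨i, hiC⟩, hiS, rfl⟩ := Finset.mem_map.1 hi
    · exact hiC
    · obtain ⟨w, hwR, hwx⟩ := hcov i hiC x hx
      exact ⟨w, Finset.mem_biUnion.2 ⟨_, hiS, Finset.mem_filter.2 ⟨hwR, x, hx, hwx⟩⟩, hwx⟩
  obtain ⟨g, hg_inj, hg⟩ := (Finset.all_card_le_biUnion_card_iff_existsInjective' touch).1 hall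
  choose z hzF hz using fun i => (Finset.mem_filter.1 (hg i)).2
  refine hnt ⟨fun i => if h : i ∈ C then z ⟨i, h⟩ else Classical.arbitrary M,
    fun i hi => by simpa [hi] using hzF ⟨i, hi⟩, fun i hi j hj hij hclose => hij ?_⟩
  simp only [dif_pos hi, dif_pos hj] at hclose
  refine congrArg Subtype.val (hg_inj (by_contra fun hne => hR ?_ ?_ hne
    (closeLE_trans (closeLE_trans (hz _) hclose) (closeLE_symm (hz _)))))
  exacts [(Finset.mem_filter.1 (hg _)).1, (Finset.mem_filter.1 (hg _)).1]

/-- Clustering `V` at the scales `10 ^ t * σ` yields centres separated enough for Hall's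
theorem. -/
lemma hasDeficientCover_of_near [Nonempty M] (V : Finset M)
    (hV : ∀ i ∈ C, ∀ x ∈ F i, ∃ v ∈ V, CloseLE L M σ v x)
    (hnt : ¬ ∃ z, IsSepTransversal L F C σ z) :
    HasDeficientCover L F C (10 ^ (V.card + 1) * σ) := by
  classical
  obtain ⟨t, ht, f, hf, hsep⟩ := exists_clustering (L := L) (fun v : V => (v : M))
    (fun t => 10 ^ t * σ) (fun t => 9 * 10 ^ t * σ) fun t => by rw [pow_succ]; ring_nf; rfl
  have h10 : 1 ≤ 10 ^ t := Nat.one_le_pow _ _ (by norm_num)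
  refine (hasDeficientCover_of_separated_cover (Finset.univ.image fun v => (f v : M))
    (s := 10 ^ t * σ + σ) ?_ ?_ hnt).mono subset_rfl ?_
  · simp only [Finset.coe_image, Finset.coe_univ, Set.image_univ]
    rintro _ ⟨v, rfl⟩ _ ⟨v', rfl⟩ hne hclose
    exact hsep v v' (fun h => hne (congrArg Subtype.val h)) (closeLE_mono (by nlinarith) hclose)
  · intro i hi x hx
    obtain ⟨v, hv, hvx⟩ := hV i hi x hx
    exact ⟨f ⟨v, hv⟩, Finset.mem_image_of_mem _ (Finset.mem_univ _), closeLE_trans (hf _) hvx⟩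
  · calc 10 ^ t * σ + σ ≤ 10 ^ (t + 1) * σ := by rw [pow_succ]; nlinarith
      _ ≤ 10 ^ (V.card + 1) * σ := Nat.mul_le_mul_right _ <|
          Nat.pow_le_pow_right (by norm_num) (by simpa using ht)

/-- For a minimal `C` without a transversal every `C.erase i` has one, and every point of
`F i` lies within `σ` of one of these at most `#C ^ 2` points. -/
theorem hasDeficientCover_of_not_exists_isSepTransversal [Nonempty M]
    (hnt : ¬ ∃ z, IsSepTransversal L F C σ z) :
    HasDeficientCover L F C (10 ^ (C.card * C.card + 1) * σ) := by
  classical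
  induction C using Finset.strongInduction with
  | H C ih =>
  by_cases hsub : ∃ i ∈ C, ¬ ∃ z, IsSepTransversal L F (C.erase i) σ z
  · obtain ⟨i, hi, hnt'⟩ := hsub
    have hlt := Finset.card_erase_lt_of_mem hi
    exact (ih _ (Finset.erase_ssubset hi) hnt').mono (Finset.erase_subset i C)
      (Nat.mul_le_mul_right _ (Nat.pow_le_pow_right (by norm_num) (by nlinarith)))
  push Not at hsub
  choose! z hz using hsub
  let V := C.biUnion fun i => (C.erase i).image (z i)
  have hV : V.card ≤ C.card * C.card := Finset.card_biUnion_le_card_mul _ _ _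
    fun i _ => Finset.card_image_le.trans (Finset.card_erase_le)
  refine (hasDeficientCover_of_near V (fun i hi x hx => ?_) hnt).mono subset_rfl
    (Nat.mul_le_mul_right _ (Nat.pow_le_pow_right (by norm_num) (by omega)))
  by_contra hfar
  push Not at hfar
  exact hnt ⟨_, (hz i hi).update hx fun j hj => hfar (z i j)
    (Finset.mem_biUnion.2 ⟨i, hi, Finset.mem_image_of_mem _ hj⟩)⟩

/-- Otherwise fewer than `#S` balls of radius `s` would contain `#S` points pairwise more than
`2 s` apart. -/
theorem exists_isSepTransversal_of_far {s : ℕ} (hs : 10 ^ (C.card * C.card + 1) * σ ≤ s)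
    (hC : C.Nonempty)
    (hfar : ∀ S ⊆ C, ∃ y : Fin S.card → M, (∀ m, ∃ i ∈ S, y m ∈ F i) ∧ Far L M (2 * s) y) :
    ∃ z, IsSepTransversal L F C σ z := by
  obtain ⟨y₀, -, -⟩ := hfar C subset_rfl
  have : Nonempty M := ⟨y₀ ⟨0, hC.card_pos⟩⟩
  by_contra hnt
  obtain ⟨S, hSC, W, hW, hcov⟩ := hasDeficientCover_of_not_exists_isSepTransversal hnt
  obtain ⟨y, hyF, hyfar⟩ := hfar S hSC
  have hnear : ∀ m, ∃ w ∈ W, CloseLE L M s w (y m) := fun m =>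
    let ⟨i, hi, hyi⟩ := hyF m
    let ⟨w, hw, hwy⟩ := hcov i hi _ hyi
    ⟨w, hw, closeLE_mono hs hwy⟩
  choose w hwW hw using hnear
  obtain ⟨m, -, m', -, hne, heq⟩ := Finset.exists_ne_map_eq_of_card_lt_of_maps_to
    (s := Finset.univ) (by simpa using hW) fun m _ => hwW m
  exact hyfar m m' hne (two_mul s ▸ closeLE_trans (closeLE_symm (hw m)) (heq ▸ hw m'))

end Transversal

section PosDefinable

variable {L : FirstOrder.Language.{u, u}} [L.IsRelational]

lemma isLocal_falsum {m : ℕ} (r : ℕ) : IsLocal r (⊥ : L.Formula (Fin m)) := by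
  simp [IsLocal]

lemma isLocal_iSup {m : ℕ} {β : Type*} [Finite β] {r : ℕ} {φ : β → L.Formula (Fin m)}
    (h : ∀ b, IsLocal r (φ b)) : IsLocal r (Formula.iSup φ) := by
  intro M _ a
  simp only [Formula.realize_iSup]
  exact exists_congr fun b => h b M a

variable (L) in
def PosDefinable (P : ∀ M : Type u, L.Structure M → Prop) : Prop :=
  ∃ p : PosBool (BasicLocal L),
    ∀ (M : Type u) [inst : L.Structure M], P M inst ↔ p.Eval fun b => b.Holds M

variable {P Q : ∀ M : Type u, L.Structure M → Prop}

lemma PosDefinable.of_iff (hP : PosDefinable L P) (h : ∀ M inst, P M inst ↔ Q M inst) :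
    PosDefinable L Q :=
  let ⟨p, hp⟩ := hP
  ⟨p, fun M inst => (h M inst).symm.trans (hp M)⟩

lemma posDefinable_holds (b : BasicLocal L) : PosDefinable L fun M _ => b.Holds M :=
  ⟨.base b, fun _ _ => Iff.rfl⟩

lemma PosDefinable.and (hP : PosDefinable L P) (hQ : PosDefinable L Q) :
    PosDefinable L fun M inst => P M inst ∧ Q M inst :=
  let ⟨p, hp⟩ := hP
  let ⟨q, hq⟩ := hQ
  ⟨.conj p q, fun M _ => and_congr (hp M) (hq M)⟩

lemma PosDefinable.or (hP : PosDefinable L P) (hQ : PosDefinable L Q) :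
    PosDefinable L fun M inst => P M inst ∨ Q M inst :=
  let ⟨p, hp⟩ := hP
  let ⟨q, hq⟩ := hQ
  ⟨.disj p q, fun M _ => or_congr (hp M) (hq M)⟩

lemma posDefinable_true : PosDefinable L fun _ _ => True :=
  ⟨.base ⟨0, 0, ⊥, isLocal_falsum 0⟩, fun _ _ =>
    iff_of_true trivial ⟨finZeroElim, fun i => i.elim0, fun i => i.elim0⟩⟩

lemma posDefinable_false : PosDefinable L fun _ _ => False :=
  ⟨.base ⟨1, 0, ⊥, isLocal_falsum 0⟩, fun _ _ =>
    iff_of_false not_false fun ⟨_, _, h⟩ => by simpa using h 0⟩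

lemma PosDefinable.finset_forall {β : Type*} (s : Finset β)
    {P : β → ∀ M : Type u, L.Structure M → Prop} (h : ∀ b ∈ s, PosDefinable L (P b)) :
    PosDefinable L fun M inst => ∀ b ∈ s, P b M inst := by
  classical
  induction s using Finset.induction_on with
  | empty => exact posDefinable_true.of_iff (by simp)
  | insert b s _ ih =>
    exact ((h b (s.mem_insert_self b)).and
      (ih fun c hc => h c (Finset.mem_insert_of_mem hc))).of_iff fun M inst => by simp

lemma PosDefinable.finset_exists {β : Type*} (s : Finset β)
    {P : β → ∀ M : Type u, L.Structure M → Prop} (h : ∀ b ∈ s, PosDefinable L (P b)) :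
    PosDefinable L fun M inst => ∃ b ∈ s, P b M inst := by
  classical
  induction s using Finset.induction_on with
  | empty => exact posDefinable_false.of_iff (by simp)
  | insert b s _ ih =>
    exact ((h b (s.mem_insert_self b)).or
      (ih fun c hc => h c (Finset.mem_insert_of_mem hc))).of_iff fun M inst => by simp

end PosDefinable

namespace AsymBasicLocal

variable {L : FirstOrder.Language.{u, u}} [L.IsRelational] (d : AsymBasicLocal L)

/- Clusters of witnesses of `d` are grown in rounds; after `t` rounds a cluster has radius
`clusterRadius t` around its centre. Centres `2 (clusterRadius t + r)` apart keep the
witnesses of different clusters more than `2 r` apart, and `10 ^ (k * k + 1)` is the scale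
lost in `exists_isSepTransversal_of_far`. -/

def clusterRadius : ℕ → ℕ
  | 0 => 0
  | t + 1 => clusterRadius t + 2 * (10 ^ (d.k * d.k + 1) * (2 * (clusterRadius t + d.r)))

def centreRadius (t : ℕ) : ℕ := 10 ^ (d.k * d.k + 1) * (2 * (d.clusterRadius t + d.r))

lemma clusterRadius_succ (t : ℕ) :
    d.clusterRadius (t + 1) = d.clusterRadius t + 2 * d.centreRadius t := rfl

lemma clusterRadius_add_le_centreRadius (t : ℕ) :
    d.clusterRadius t + 2 * d.r ≤ d.centreRadius t :=
  calc d.clusterRadius t + 2 * d.r ≤ 1 * (2 * (d.clusterRadius t + d.r)) := by omega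
    _ ≤ d.centreRadius t := Nat.mul_le_mul_right _ (Nat.one_le_pow _ _ (by norm_num))

noncomputable def farCentres [Finite (Σ n, L.Relations n)] (c : Fin d.k → Fin d.k) (t : ℕ)
    (Q : Finset (Fin d.k)) : BasicLocal L where
  k := Q.card
  r := d.centreRadius t
  ψ := Formula.iSup fun s : Q =>
    witnessClusterFormula L (fun i : {i // c i = s} => d.ψ i) d.r (d.clusterRadius t)
  isLocal := isLocal_iSup fun _ =>
    isLocal_witnessClusterFormula (fun i => d.isLocal i) (d.clusterRadius_add_le_centreRadius t)

variable [Finite (Σ n, L.Relations n)] {M : Type u} [L.Structure M]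

lemma holds_farCentres_iff {c : Fin d.k → Fin d.k} {t : ℕ} {Q : Finset (Fin d.k)} :
    (d.farCentres c t Q).Holds M ↔ ∃ b : Fin Q.card → M,
      (∀ m, ∃ s ∈ Q, WitnessCluster (fun i : {i // c i = s} => d.ψ i) d.r (d.clusterRadius t)
        (b m)) ∧ Far L M (2 * d.centreRadius t) b := by
  simp [BasicLocal.Holds, farCentres, and_comm]

lemma holds_farCentres_of_clustering {a : Fin d.k → M} (ha : Far L M (2 * d.r) a)
    (hψ : ∀ i, (d.ψ i).Realize fun _ => a i) {t : ℕ} {f : Fin d.k → Fin d.k}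
    (hf : ∀ i, CloseLE L M (d.clusterRadius t) (a (f i)) (a i))
    (hsep : ∀ i j, f i ≠ f j → ¬ CloseLE L M (2 * d.centreRadius t) (a (f i)) (a (f j)))
    {Q : Finset (Fin d.k)} (hQ : Q ⊆ Finset.univ.image f) : (d.farCentres f t Q).Holds M := by
  have hlabel : ∀ s ∈ Q, ∃ i, f i = s := fun s hs => by simpa using hQ hs
  refine d.holds_farCentres_iff.2 ⟨fun m => a (Q.equivFin.symm m),
    fun m => ⟨_, (Q.equivFin.symm m).2, fun i => a i,
      fun i => ⟨by simpa only [i.2] using hf i, hψ i⟩,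
      fun i j hij => ha i j (Subtype.coe_ne_coe.2 hij)⟩, fun m m' hmm' => ?_⟩
  obtain ⟨i, hi⟩ := hlabel _ (Q.equivFin.symm m).2
  obtain ⟨j, hj⟩ := hlabel _ (Q.equivFin.symm m').2
  have hne : f i ≠ f j := by
    rw [hi, hj]
    exact fun h => hmm' (Q.equivFin.symm.injective (Subtype.ext h))
  simpa only [hi, hj] using hsep i j hne

lemma holds_of_forall_farCentres {c : Fin d.k → Fin d.k} {t : ℕ}
    (h : ∀ Q ⊆ Finset.univ.image c, (d.farCentres c t Q).Holds M) : d.Holds M := by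
  rcases isEmpty_or_nonempty (Fin d.k) with hk | hk
  · exact ⟨isEmptyElim, fun i => isEmptyElim i, isEmptyElim⟩
  set D := d.clusterRadius t
  have hC : (Finset.univ.image c).card ≤ d.k :=
    Finset.card_image_le.trans_eq (Finset.card_fin d.k)
  obtain ⟨z, hzF, hzsep⟩ := exists_isSepTransversal_of_far
    (F := fun s => {x | WitnessCluster (fun i : {i // c i = s} => d.ψ i) d.r D x})
    (σ := 2 * (D + d.r)) (s := d.centreRadius t)
    (Nat.mul_le_mul_right _ (Nat.pow_le_pow_right (by norm_num) (by gcongr)))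
    (Finset.univ_nonempty.image c) fun S hS => d.holds_farCentres_iff.1 (h S hS)
  have : Nonempty M := ⟨z (Classical.arbitrary _)⟩
  choose! y hy hysep using fun s (hs : s ∈ Finset.univ.image c) => (hzF s hs).exists_extend
  have hc : ∀ i, c i ∈ Finset.univ.image c :=
    fun i => Finset.mem_image_of_mem c (Finset.mem_univ i)
  refine ⟨fun i => y (c i) i, fun i j hij hclose => ?_, fun i => (hy _ (hc i) i rfl).2⟩
  by_cases hcij : c i = c j
  · exact hysep _ (hc j) i j hcij rfl hij (by simpa only [hcij] using hclose)
  · have hzz : CloseLE L M (D + (2 * d.r + D)) (z (c i)) (z (c j)) :=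
      closeLE_trans (hy _ (hc i) i rfl).1
        (closeLE_trans hclose (closeLE_symm (hy _ (hc j) j rfl).1))
    exact hzsep _ (hc i) _ (hc j) hcij (closeLE_mono (by omega) hzz)

theorem holds_iff_exists_clustering :
    d.Holds M ↔ ∃ c ∈ (Finset.univ : Finset (Fin d.k → Fin d.k)), ∃ t ∈ Finset.range (d.k + 1),
      ∀ Q ∈ (Finset.univ.image c).powerset, (d.farCentres c t Q).Holds M := by
  constructor
  · rintro ⟨a, ha, hψ⟩
    obtain ⟨t, ht, f, hf, hsep⟩ := exists_clustering (L := L) a d.clusterRadius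
      (fun t => 2 * d.centreRadius t) fun t => (d.clusterRadius_succ t).ge
    exact ⟨f, Finset.mem_univ f, t, Finset.mem_range.2 (by simpa [Nat.lt_succ_iff] using ht),
      fun Q hQ => d.holds_farCentres_of_clustering ha hψ hf hsep (Finset.mem_powerset.1 hQ)⟩
  · rintro ⟨c, -, t, -, h⟩
    exact d.holds_of_forall_farCentres fun Q hQ => h Q (Finset.mem_powerset.2 hQ)

end AsymBasicLocal

end Gaifman

open Gaifman

/-- **From asymmetric basic local to basic local.** Every asymmetric basic local sentence is
equivalent over the class of all structures to a positive Boolean combination (conjunctions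
and disjunctions only) of basic local sentences. -/
theorem asym_to_basic (L : FirstOrder.Language.{u, u}) [L.IsRelational]
    [Finite (Σ n, L.Relations n)] (d : AsymBasicLocal L) :
    ∃ p : PosBool (BasicLocal L),
      ∀ (M : Type u) [L.Structure M], (d.Holds M ↔ p.Eval fun b => b.Holds M) :=
  (PosDefinable.finset_exists _ fun c _ => PosDefinable.finset_exists _ fun t _ =>
    PosDefinable.finset_forall _ fun Q _ => posDefinable_holds (d.farCentres c t Q)).of_iff
    fun _ _ => d.holds_iff_exists_clustering.symm
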